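/- arXiv:1907.09857 — 5 statements merged into one kernel-verified Lean document; each statement's English description precedes it below -/
import Mathlib

section
/- For every α > 0, λ > 0 and every z ∈ ℝ, the characteristic function of the Gamma distribution Γ(α,λ) satisfies φ(z) = (λ/(λ − iz))^α, where the complex power is the principal branch (note that λ/(λ − iz) has positive real part, so the principal power is well defined). -/
/-!
For real `t < r`, tilting the density of `Γ(a, r)` by `exp (t x)` gives `(r / (r - t)) ^ a` times
the density of `Γ(a, r - t)`, so the moment generating function is `(r / (r - t)) ^ a` there.
Both the complex moment generating function `z ↦ ∫ exp (z x) dΓ(a, r)` and `(r / (r - z)) ^ a`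
are holomorphic on the half-plane `re z < r` and agree on a real segment, hence on the whole
half-plane by the identity theorem; the characteristic function is the restriction to the
imaginary axis.
-/

open MeasureTheory ProbabilityTheory Filter Complex
open scoped Topology

namespace Complex

lemma ofReal_sub_ne_zero_of_re_lt {r : ℝ} {z : ℂ} (hz : z.re < r) : (r : ℂ) - z ≠ 0 :=
  sub_ne_zero.2 fun h ↦ by subst h; simp at hz

lemma re_ofReal_div_sub_pos {r : ℝ} {z : ℂ} (hr : 0 < r) (hz : z.re < r) :
    0 < ((r : ℂ) / (r - z)).re := by
  rw [div_re]
  simp only [ofReal_re, ofReal_im, sub_re, zero_mul, zero_div, add_zero]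
  exact div_pos (mul_pos hr (sub_pos.2 hz)) (normSq_pos.2 (ofReal_sub_ne_zero_of_re_lt hz))

end Complex

namespace ProbabilityTheory

variable {a r : ℝ}

lemma measurable_gammaPDF (a r : ℝ) : Measurable (gammaPDF a r) :=
  (measurable_gammaPDFReal a r).ennreal_ofReal

lemma integral_gammaMeasure_eq_integral_smul {E : Type*} [NormedAddCommGroup E] [NormedSpace ℝ E]
    (ha : 0 < a) (hr : 0 < r) (f : ℝ → E) :
    ∫ x, f x ∂gammaMeasure a r = ∫ x, gammaPDFReal a r x • f x := by
  rw [gammaMeasure, integral_withDensity_eq_integral_toReal_smul (measurable_gammaPDF a r)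
    (ae_of_all _ fun _ ↦ ENNReal.ofReal_lt_top)]
  simp_rw [gammaPDF, ENNReal.toReal_ofReal (gammaPDFReal_nonneg ha hr _)]

lemma integrable_gammaMeasure_iff {E : Type*} [NormedAddCommGroup E] [NormedSpace ℝ E]
    (ha : 0 < a) (hr : 0 < r) {f : ℝ → E} :
    Integrable f (gammaMeasure a r) ↔ Integrable (fun x ↦ gammaPDFReal a r x • f x) := by
  rw [gammaMeasure, integrable_withDensity_iff_integrable_smul' (measurable_gammaPDF a r)
    (ae_of_all _ fun _ ↦ ENNReal.ofReal_lt_top)]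
  simp_rw [gammaPDF, ENNReal.toReal_ofReal (gammaPDFReal_nonneg ha hr _)]

lemma integrable_gammaPDFReal (ha : 0 < a) (hr : 0 < r) : Integrable (gammaPDFReal a r) := by
  have := isProbabilityMeasure_gammaMeasure ha hr
  simpa using (integrable_gammaMeasure_iff ha hr).1 (integrable_const (1 : ℝ))

lemma integral_gammaPDFReal (ha : 0 < a) (hr : 0 < r) : ∫ x, gammaPDFReal a r x = 1 := by
  have := isProbabilityMeasure_gammaMeasure ha hr
  simpa using (integral_gammaMeasure_eq_integral_smul ha hr fun _ ↦ (1 : ℝ)).symm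

lemma gammaPDFReal_mul_exp {t : ℝ} (hr : 0 ≤ r) (ht : t < r) (x : ℝ) :
    gammaPDFReal a r x * Real.exp (t * x) = (r / (r - t)) ^ a * gammaPDFReal a (r - t) x := by
  have hrt : 0 < r - t := sub_pos.2 ht
  unfold gammaPDFReal
  split_ifs
  · rw [Real.div_rpow hr hrt.le, show -(r * x) = -((r - t) * x) - t * x by ring, Real.exp_sub]
    field_simp
  · simp

lemma integrable_exp_mul_gammaMeasure (ha : 0 < a) (hr : 0 < r) {t : ℝ} (ht : t < r) :
    Integrable (fun x ↦ Real.exp (t * x)) (gammaMeasure a r) := by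
  simp_rw [integrable_gammaMeasure_iff ha hr, smul_eq_mul, gammaPDFReal_mul_exp hr.le ht]
  exact (integrable_gammaPDFReal ha (sub_pos.2 ht)).const_mul _

lemma mgf_id_gammaMeasure (ha : 0 < a) (hr : 0 < r) {t : ℝ} (ht : t < r) :
    mgf id (gammaMeasure a r) t = (r / (r - t)) ^ a := by
  simp_rw [mgf, id, integral_gammaMeasure_eq_integral_smul ha hr, smul_eq_mul,
    gammaPDFReal_mul_exp hr.le ht, integral_const_mul, integral_gammaPDFReal ha (sub_pos.2 ht),
    mul_one]

theorem complexMGF_id_gammaMeasure (ha : 0 < a) (hr : 0 < r) {z : ℂ} (hz : z.re < r) :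
    complexMGF id (gammaMeasure a r) z = (r / (r - z)) ^ (a : ℂ) := by
  set U : Set ℂ := {w | w.re < r}
  have hU : IsOpen U := isOpen_lt continuous_re continuous_const
  have hmgf : AnalyticOnNhd ℂ (complexMGF id (gammaMeasure a r)) U :=
    analyticOnNhd_complexMGF.mono fun w hw ↦ interior_maximal
      (fun t ht ↦ integrable_exp_mul_gammaMeasure ha hr ht) isOpen_Iio hw
  have hpow : AnalyticOnNhd ℂ (fun w : ℂ ↦ ((r : ℂ) / (r - w)) ^ (a : ℂ)) U := by
    refine DifferentiableOn.analyticOnNhd (fun w hw ↦ ?_) hU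
    exact ((differentiableAt_const _).div (by fun_prop) (ofReal_sub_ne_zero_of_re_lt hw)).cpow
      (differentiableAt_const _) (Or.inl (re_ofReal_div_sub_pos hr hw)) |>.differentiableWithinAt
  have hreal : ∀ᶠ t : ℝ in 𝓝[≠] 0,
      complexMGF id (gammaMeasure a r) t = ((r : ℂ) / (r - t)) ^ (a : ℂ) := by
    filter_upwards [eventually_nhdsWithin_of_eventually_nhds (eventually_lt_nhds hr)] with t ht
    rw [complexMGF_ofReal, mgf_id_gammaMeasure ha hr ht, ← ofReal_sub, ← ofReal_div,
      ofReal_cpow (div_pos hr (sub_pos.2 ht)).le]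
  have hofReal : Tendsto ((↑) : ℝ → ℂ) (𝓝[≠] 0) (𝓝[≠] 0) :=
    continuous_ofReal.continuousWithinAt.tendsto_nhdsWithin fun _ _ ↦ by simp_all
  exact hmgf.eqOn_of_preconnected_of_frequently_eq hpow (convex_halfSpace_re_lt r).isPreconnected
    (by simpa [U] using hr) (hofReal.frequently hreal.frequently) hz

end ProbabilityTheory

/-- For every `α > 0`, `λ > 0` and `z : ℝ`, the characteristic function of the
Gamma distribution `Γ(α,λ)` satisfies `φ(z) = (λ/(λ − iz))^α` (principal branch power). -/
theorem gamma_charFun (α lam : ℝ) (hα : 0 < α) (hlam : 0 < lam) (z : ℝ) :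
    ∫ x, Complex.exp (Complex.I * z * x) ∂(gammaMeasure α lam)
      = ((lam : ℂ) / (lam - Complex.I * z)) ^ (α : ℂ) := by
  rw [mul_comm Complex.I, ← complexMGF_id_gammaMeasure hα hlam (by simpa using hlam)]
  rfl
end

section
/- Let α₁⁺, α₂⁺, λ⁺, α₁⁻, α₂⁻, λ⁻ > 0, and let Z₁ and Z₂ be independent real random variables with Z₁ ~ Γ(α₁⁺,λ⁺;α₁⁻,λ⁻) and Z₂ ~ Γ(α₂⁺,λ⁺;α₂⁻,λ⁻). Then Z₁ + Z₂ ~ Γ(α₁⁺+α₂⁺, λ⁺; α₁⁻+α₂⁻, λ⁻); equivalently, the convolution Γ(α₁⁺,λ⁺;α₁⁻,λ⁻) ∗ Γ(α₂⁺,λ⁺;α₂⁻,λ⁻) equals Γ(α₁⁺+α₂⁺, λ⁺; α₁⁻+α₂⁻, λ⁻). -/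
/-!
Writing a bilateral Gamma law as `Γ(α⁺, λ⁺) ∗ (−Γ(α⁻, λ⁻))`, the claim reduces, by commutativity
and associativity of convolution and the fact that negation commutes with convolution, to the
additivity `Γ(a, r) ∗ Γ(b, r) = Γ(a + b, r)` of Gamma laws with a common rate. The latter is a
density computation: substituting `y = z t` in the convolution of the densities at `z > 0` gives
the density of `Γ(a + b, r)` at `z` times the Beta density at `t`, whose integral is `1`.
-/

open MeasureTheory ProbabilityTheory

/-- The bilateral Gamma distribution `Γ(α⁺,λ⁺;α⁻,λ⁻)`: the law of `X − Y` for independent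
`X ~ Γ(α⁺,λ⁺)`, `Y ~ Γ(α⁻,λ⁻)`. -/
noncomputable def bilateralGammaMeasure (ap lp am lm : ℝ) : Measure ℝ :=
  ((gammaMeasure ap lp).prod (gammaMeasure am lm)).map (fun p => p.1 - p.2)

open Real Measure
open scoped ENNReal

namespace MeasureTheory.Measure

variable {M : Type*} [MeasurableSpace M]

theorem map_sub_prod_eq_conv_map_neg [AddGroup M] [MeasurableAdd₂ M] [MeasurableNeg M]
    (μ ν : Measure M) [SFinite μ] [SFinite ν] :
    (μ.prod ν).map (fun p => p.1 - p.2) = μ ∗ ν.map Neg.neg := by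
  conv_rhs => rw [← map_id (μ := μ)]
  rw [conv, map_prod_map _ _ measurable_id measurable_neg,
    map_map measurable_add (measurable_id.prodMap measurable_neg)]
  simp only [Function.comp_def, Prod.map, id, sub_eq_add_neg]

theorem map_neg_conv [AddCommGroup M] [MeasurableAdd₂ M] [MeasurableNeg M]
    (μ ν : Measure M) [SFinite μ] [SFinite ν] :
    (μ ∗ ν).map Neg.neg = μ.map Neg.neg ∗ ν.map Neg.neg :=
  map_conv_addMonoidHom negAddMonoidHom measurable_neg

theorem conv_conv_conv_comm [AddCommMonoid M] [MeasurableAdd₂ M] (μ ν ρ τ : Measure M)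
    [SFinite μ] [SFinite ν] [SFinite ρ] [SFinite τ] :
    (μ ∗ ν) ∗ (ρ ∗ τ) = (μ ∗ ρ) ∗ (ν ∗ τ) := by
  rw [conv_assoc, ← conv_assoc ν, conv_comm ν ρ, conv_assoc ρ, ← conv_assoc μ]

end MeasureTheory.Measure

theorem lintegral_eq_ofReal_mul_lintegral_comp_mul (f : ℝ → ℝ≥0∞) {c : ℝ} (hc : 0 < c) :
    ∫⁻ x, f x = ENNReal.ofReal c * ∫⁻ t, f (c * t) := by
  have h := lintegral_map_equiv f (MeasurableEquiv.mulLeft₀ c hc.ne') (μ := volume)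
  rw [MeasurableEquiv.coe_mulLeft₀, Real.map_volume_mul_left hc.ne', lintegral_smul_measure,
    abs_of_pos (inv_pos.mpr hc)] at h
  rw [← h, smul_eq_mul, ← mul_assoc, ← ENNReal.ofReal_mul hc.le, mul_inv_cancel₀ hc.ne',
    ENNReal.ofReal_one, one_mul]

namespace ProbabilityTheory

variable {a b r : ℝ}

theorem gammaPDF_mul_gammaPDF_of_mem_Ioo (ha : 0 < a) (hb : 0 < b) (hr : 0 < r) {z t : ℝ}
    (hz : 0 < z) (ht : t ∈ Set.Ioo 0 1) :
    ENNReal.ofReal z * (gammaPDF a r (z * t) * gammaPDF b r (-(z * t) + z))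
      = gammaPDF (a + b) r z * betaPDF a b t := by
  obtain ⟨ht0, ht1⟩ := ht
  have hzt : -(z * t) + z = z * (1 - t) := by ring
  rw [hzt, gammaPDF_of_nonneg (by positivity), gammaPDF_of_nonneg (by nlinarith),
    gammaPDF_of_nonneg hz.le, betaPDF_of_pos_lt_one ht0 ht1, ← ENNReal.ofReal_mul (by positivity),
    ← ENNReal.ofReal_mul hz.le, ← ENNReal.ofReal_mul (by positivity)]
  congr 1
  have hΓa := (Gamma_pos_of_pos ha).ne'
  have hΓb := (Gamma_pos_of_pos hb).ne'
  have hΓab := (Gamma_pos_of_pos (add_pos ha hb)).ne'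
  have hrpow_r : r ^ (a + b) = r ^ a * r ^ b := rpow_add hr a b
  have hrpow_z : z ^ (a + b - 1) = z * z ^ (a - 1) * z ^ (b - 1) := by
    rw [← rpow_one_add' hz.le (by linarith), ← rpow_add hz]; ring_nf
  have hexp : exp (-(r * z)) = exp (-(r * (z * t))) * exp (-(r * (z * (1 - t)))) := by
    rw [← exp_add]; ring_nf
  rw [mul_rpow hz.le ht0.le, mul_rpow hz.le (by linarith), hrpow_r, hrpow_z, hexp, beta]
  field_simp

theorem gammaPDF_mul_gammaPDF_of_notMem_Icc {z t : ℝ} (hz : 0 < z) (ht : t ∉ Set.Icc 0 1) :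
    ENNReal.ofReal z * (gammaPDF a r (z * t) * gammaPDF b r (-(z * t) + z))
      = gammaPDF (a + b) r z * betaPDF a b t := by
  rcases not_and_or.mp ht with ht0 | ht1
  · rw [not_le] at ht0
    rw [gammaPDF_of_neg (mul_neg_of_pos_of_neg hz ht0), betaPDF_eq_zero_of_nonpos ht0.le]
    simp
  · rw [not_le] at ht1
    rw [gammaPDF_of_neg (show -(z * t) + z < 0 by nlinarith), betaPDF_eq_zero_of_one_le ht1.le]
    simp

theorem lconvolution_gammaPDF_of_neg {z : ℝ} (hz : z < 0) :
    (gammaPDF a r ⋆ₗ gammaPDF b r) z = 0 := by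
  have hvanish (y : ℝ) : gammaPDF a r y * gammaPDF b r (-y + z) = 0 := by
    rcases lt_or_ge y 0 with hy | hy
    · rw [gammaPDF_of_neg hy, zero_mul]
    · rw [gammaPDF_of_neg (show -y + z < 0 by linarith), mul_zero]
  simp [lconvolution_def, hvanish]

theorem lconvolution_gammaPDF_of_pos (ha : 0 < a) (hb : 0 < b) (hr : 0 < r) {z : ℝ}
    (hz : 0 < z) : (gammaPDF a r ⋆ₗ gammaPDF b r) z = gammaPDF (a + b) r z := by
  have hsubst : ∀ᵐ t, ENNReal.ofReal z * (gammaPDF a r (z * t) * gammaPDF b r (-(z * t) + z))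
      = gammaPDF (a + b) r z * betaPDF a b t := by
    filter_upwards [Measure.ae_ne volume 0, Measure.ae_ne volume 1] with t ht0 ht1
    by_cases ht : t ∈ Set.Ioo 0 1
    · exact gammaPDF_mul_gammaPDF_of_mem_Ioo ha hb hr hz ht
    · exact gammaPDF_mul_gammaPDF_of_notMem_Icc hz
        fun h => ht ⟨h.1.lt_of_ne' ht0, h.2.lt_of_ne ht1⟩
  rw [lconvolution_def, lintegral_eq_ofReal_mul_lintegral_comp_mul _ hz,
    ← lintegral_const_mul' _ _ ENNReal.ofReal_ne_top, lintegral_congr_ae hsubst,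
    lintegral_const_mul' (gammaPDF (a + b) r z) _ ENNReal.ofReal_ne_top,
    lintegral_betaPDF_eq_one ha hb, mul_one]

theorem lconvolution_gammaPDF_ae_eq (ha : 0 < a) (hb : 0 < b) (hr : 0 < r) :
    gammaPDF a r ⋆ₗ gammaPDF b r =ᵐ[volume] gammaPDF (a + b) r := by
  filter_upwards [Measure.ae_ne volume 0] with z hz
  rcases hz.lt_or_gt with hz | hz
  · rw [lconvolution_gammaPDF_of_neg hz, gammaPDF_of_neg hz]
  · exact lconvolution_gammaPDF_of_pos ha hb hr hz

theorem gammaMeasure_conv_gammaMeasure (ha : 0 < a) (hb : 0 < b) (hr : 0 < r) :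
    gammaMeasure a r ∗ gammaMeasure b r = gammaMeasure (a + b) r := by
  rw [gammaMeasure, gammaMeasure, gammaMeasure,
    conv_withDensity_eq_lconvolution (f := gammaPDF a r) (g := gammaPDF b r)
      (measurable_gammaPDFReal a r).ennreal_ofReal (measurable_gammaPDFReal b r).ennreal_ofReal]
  exact withDensity_congr_ae (lconvolution_gammaPDF_ae_eq ha hb hr)

instance sFinite_gammaMeasure : SFinite (gammaMeasure a r) := by
  unfold gammaMeasure
  infer_instance

end ProbabilityTheory

theorem bilateralGammaMeasure_eq_conv (ap lp am lm : ℝ) :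
    bilateralGammaMeasure ap lp am lm = gammaMeasure ap lp ∗ (gammaMeasure am lm).map Neg.neg :=
  map_sub_prod_eq_conv_map_neg _ _

theorem bilateralGammaMeasure_conv {a1p a2p lp a1m a2m lm : ℝ}
    (ha1p : 0 < a1p) (ha2p : 0 < a2p) (hlp : 0 < lp)
    (ha1m : 0 < a1m) (ha2m : 0 < a2m) (hlm : 0 < lm) :
    bilateralGammaMeasure a1p lp a1m lm ∗ bilateralGammaMeasure a2p lp a2m lm
      = bilateralGammaMeasure (a1p + a2p) lp (a1m + a2m) lm := by
  simp only [bilateralGammaMeasure_eq_conv]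
  rw [conv_conv_conv_comm, ← map_neg_conv, gammaMeasure_conv_gammaMeasure ha1p ha2p hlp,
    gammaMeasure_conv_gammaMeasure ha1m ha2m hlm]

/-- if `Z₁ ~ Γ(α₁⁺,λ⁺;α₁⁻,λ⁻)` and `Z₂ ~ Γ(α₂⁺,λ⁺;α₂⁻,λ⁻)` are independent, then
`Z₁ + Z₂ ~ Γ(α₁⁺+α₂⁺,λ⁺;α₁⁻+α₂⁻,λ⁻)`; equivalently the corresponding convolution identity
holds. -/
theorem bilateralGamma_add (a1p a2p lp a1m a2m lm : ℝ)
    (ha1p : 0 < a1p) (ha2p : 0 < a2p) (hlp : 0 < lp)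
    (ha1m : 0 < a1m) (ha2m : 0 < a2m) (hlm : 0 < lm)
    {Ω : Type*} [MeasurableSpace Ω] (P : Measure Ω) [IsProbabilityMeasure P]
    (Z₁ Z₂ : Ω → ℝ) (hZ₁ : Measurable Z₁) (hZ₂ : Measurable Z₂)
    (hindep : IndepFun Z₁ Z₂ P)
    (hlaw₁ : P.map Z₁ = bilateralGammaMeasure a1p lp a1m lm)
    (hlaw₂ : P.map Z₂ = bilateralGammaMeasure a2p lp a2m lm) :
    P.map (fun ω => Z₁ ω + Z₂ ω) = bilateralGammaMeasure (a1p + a2p) lp (a1m + a2m) lm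
      ∧ (bilateralGammaMeasure a1p lp a1m lm).conv (bilateralGammaMeasure a2p lp a2m lm)
          = bilateralGammaMeasure (a1p + a2p) lp (a1m + a2m) lm := by
  have hconv := bilateralGammaMeasure_conv ha1p ha2p hlp ha1m ha2m hlm
  refine ⟨?_, hconv⟩
  rw [← hconv, ← hlaw₁, ← hlaw₂]
  exact hindep.map_add_eq_map_conv_map hZ₁ hZ₂
end

section
/- Let α⁺, λ⁺, α⁻, λ⁻ > 0 and let Z ~ Γ(α⁺,λ⁺;α⁻,λ⁻), with cumulant generating function Ψ(z) = ln E[e^{zZ}] for z ∈ (−λ⁻, λ⁺). Then for every n ≥ 1, the n-th cumulant κ_n, i.e. the n-th iterated derivative of Ψ at 0, equals κ_n = (n−1)! · ( α⁺/(λ⁺)^n + (−1)^n α⁻/(λ⁻)^n ). -/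
/-!
By Fubini, the moment generating function of `X - Y` factors as `M⁺(z) M⁻(-z)`, and the Gamma
integral gives `M(t) = (λ / (λ - t))^α` for `t < λ`. Hence near `0` the cumulant generating function
is `α⁺ (log λ⁺ - log (λ⁺ - z)) + α⁻ (log λ⁻ - log (λ⁻ + z))`, and its derivatives follow from
`log⁽ⁿ⁺¹⁾ x = (-1)ⁿ n! / xⁿ⁺¹`.
-/

open MeasureTheory ProbabilityTheory

open Set Real Filter Topology

theorem integral_gammaMeasure_eq_integral_mul {a r : ℝ} (ha : 0 < a) (hr : 0 < r) (f : ℝ → ℝ) :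
    ∫ x, f x ∂gammaMeasure a r = ∫ x, gammaPDFReal a r x * f x := by
  have hmeas : Measurable (gammaPDF a r) := (measurable_gammaPDFReal a r).ennreal_ofReal
  rw [gammaMeasure, integral_withDensity_eq_integral_toReal_smul hmeas
    (ae_of_all _ fun _ => ENNReal.ofReal_lt_top)]
  simp [gammaPDF, ENNReal.toReal_ofReal (gammaPDFReal_nonneg ha hr _)]

theorem integral_exp_mul_gammaMeasure {a r t : ℝ} (ha : 0 < a) (hr : 0 < r) (ht : t < r) :
    ∫ x, exp (t * x) ∂gammaMeasure a r = (r / (r - t)) ^ a := by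
  have hrt : 0 < r - t := sub_pos.2 ht
  have hdensity : (fun x => gammaPDFReal a r x * exp (t * x)) = (Ici 0).indicator
      fun x => r ^ a / Gamma a * (x ^ (a - 1) * exp (-((r - t) * x))) := by
    ext x
    by_cases hx : 0 ≤ x
    · simp only [gammaPDFReal, if_pos hx, indicator_of_mem (mem_Ici.2 hx), mul_assoc, ← exp_add]
      ring_nf
    · simp [gammaPDFReal, hx]
  rw [integral_gammaMeasure_eq_integral_mul ha hr, hdensity, integral_indicator measurableSet_Ici,
    integral_Ici_eq_integral_Ioi, integral_const_mul, integral_rpow_mul_exp_neg_mul_Ioi ha hrt,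
    div_rpow hr.le hrt.le, div_rpow zero_le_one hrt.le, one_rpow]
  field_simp [(Gamma_pos_of_pos ha).ne']

theorem log_integral_exp_mul_gammaMeasure {a r t : ℝ} (ha : 0 < a) (hr : 0 < r) (ht : t < r) :
    log (∫ x, exp (t * x) ∂gammaMeasure a r) = a * (log r - log (r - t)) := by
  rw [integral_exp_mul_gammaMeasure ha hr ht, log_rpow (div_pos hr (sub_pos.2 ht)),
    log_div hr.ne' (sub_pos.2 ht).ne']

instance (a r : ℝ) : SFinite (gammaMeasure a r) := by
  rw [gammaMeasure]
  infer_instance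

theorem integral_exp_mul_bilateralGammaMeasure (ap lp am lm z : ℝ) :
    ∫ x, exp (z * x) ∂bilateralGammaMeasure ap lp am lm
      = (∫ x, exp (z * x) ∂gammaMeasure ap lp) * ∫ y, exp (-z * y) ∂gammaMeasure am lm := by
  rw [bilateralGammaMeasure, integral_map (by fun_prop) (by fun_prop), ← integral_prod_mul]
  congr with p
  rw [← exp_add]
  ring_nf

-- No hypothesis on `x`: `Real.log x = Real.log |x|` and `deriv Real.log 0 = 0 = 0⁻¹`.
theorem Real.iteratedDeriv_succ_log (n : ℕ) (x : ℝ) :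
    iteratedDeriv (n + 1) log x = (-1) ^ n * n.factorial * (x ^ (n + 1))⁻¹ := by
  rw [iteratedDeriv_succ', deriv_log', iteratedDeriv_eq_iterate, iter_deriv_inv,
    show (-1 - n : ℤ) = -((n + 1 : ℕ) : ℤ) by push_cast; ring, zpow_neg, zpow_natCast]

theorem iteratedDeriv_succ_mul_log_sub_log_sub (a r : ℝ) (n : ℕ) (t : ℝ) :
    iteratedDeriv (n + 1) (fun s => a * (log r - log (r - s))) t
      = n.factorial * a / (r - t) ^ (n + 1) := by
  rw [iteratedDeriv_const_mul_field, iteratedDeriv_const_sub n.succ_pos, iteratedDeriv_neg,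
    iteratedDeriv_comp_const_sub]
  simp only [Real.iteratedDeriv_succ_log, smul_eq_mul, Nat.succ_eq_add_one]
  have h : (-1 : ℝ) ^ n * (-1) ^ n = 1 := by rw [← mul_pow]; norm_num
  linear_combination (a * n.factorial * ((r - t) ^ (n + 1))⁻¹) * h

/-- for `Z ~ Γ(α⁺,λ⁺;α⁻,λ⁻)` with cumulant generating function
`Ψ(z) = ln E[e^{zZ}]`, the `n`-th cumulant (the `n`-th iterated derivative of `Ψ` at `0`)
equals `κ_n = (n−1)!(α⁺/(λ⁺)ⁿ + (−1)ⁿ α⁻/(λ⁻)ⁿ)` for every `n ≥ 1`. -/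
theorem bilateralGamma_cumulants (ap lp am lm : ℝ)
    (hap : 0 < ap) (hlp : 0 < lp) (ham : 0 < am) (hlm : 0 < lm) (n : ℕ) (hn : 1 ≤ n) :
    iteratedDeriv n
        (fun z => Real.log (∫ x, Real.exp (z * x) ∂(bilateralGammaMeasure ap lp am lm))) 0
      = (Nat.factorial (n - 1) : ℝ) * (ap / lp ^ n + (-1 : ℝ) ^ n * am / lm ^ n) := by
  obtain ⟨m, rfl⟩ := Nat.exists_eq_add_of_le' hn
  -- `lm - -z` rather than `lm + z`, so that the second summand has the shape `g (-z)`.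
  have hcgf : (fun z => log (∫ x, exp (z * x) ∂bilateralGammaMeasure ap lp am lm)) =ᶠ[𝓝 0]
      fun z => ap * (log lp - log (lp - z)) + am * (log lm - log (lm - -z)) := by
    filter_upwards [Ioo_mem_nhds (neg_neg_of_pos hlm) hlp] with z ⟨hzm, hzp⟩
    rw [integral_exp_mul_bilateralGammaMeasure, log_mul,
      log_integral_exp_mul_gammaMeasure hap hlp hzp,
      log_integral_exp_mul_gammaMeasure ham hlm (by linarith)]
    · rw [integral_exp_mul_gammaMeasure hap hlp hzp]
      exact (rpow_pos_of_pos (div_pos hlp (by linarith)) _).ne'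
    · rw [integral_exp_mul_gammaMeasure ham hlm (by linarith)]
      exact (rpow_pos_of_pos (div_pos hlm (by linarith)) _).ne'
  rw [hcgf.iteratedDeriv_eq,
    iteratedDeriv_fun_add (by fun_prop (disch := simp; linarith))
      (by fun_prop (disch := simp; linarith)),
    iteratedDeriv_comp_neg _ fun t => am * (log lm - log (lm - t)),
    iteratedDeriv_succ_mul_log_sub_log_sub, iteratedDeriv_succ_mul_log_sub_log_sub]
  simp only [sub_zero, neg_zero, smul_eq_mul, Nat.add_sub_cancel]
  ring
end

section
/- Let α⁺, λ⁺, α⁻, λ⁻ > 0. Then the bilateral Gamma distribution Γ(α⁺,λ⁺;α⁻,λ⁻) is absolutely continuous with respect to Lebesgue measure with density f given for x > 0 by f(x) = [(λ⁺)^{α⁺}(λ⁻)^{α⁻} / ((λ⁺+λ⁻)^{α⁻} Γ(α⁺) Γ(α⁻))] e^{−λ⁺x} ∫₀^∞ v^{α⁻−1} (x + v/(λ⁺+λ⁻))^{α⁺−1} e^{−v} dv, and for x < 0 by the symmetric expression with the roles of (α⁺,λ⁺) and (α⁻,λ⁻) interchanged and x replaced by |x|: f(x) = [(λ⁻)^{α⁻}(λ⁺)^{α⁺}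 / ((λ⁺+λ⁻)^{α⁺} Γ(α⁻) Γ(α⁺))] e^{−λ⁻|x|} ∫₀^∞ v^{α⁺−1} (|x| + v/(λ⁺+λ⁻))^{α⁻−1} e^{−v} dv. -/
open MeasureTheory ProbabilityTheory

/-!
The density of `X − Y` is the correlation `s ↦ ∫ f₊(s + y) f₋(y) dy` of the two Gamma densities.
For `s > 0` the product of the densities is, up to a constant, `y^(α⁻-1) (s+y)^(α⁺-1)
e^{-(λ⁺+λ⁻)y} e^{-λ⁺s}`, and the substitution `v = (λ⁺+λ⁻) y` gives the stated formula; the case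
`s < 0` is the same computation for `Y − X`. The correlation integral is a priori only an
extended-real number; since it integrates to `1` it is finite almost everywhere, which is what
lets it be written as a real (Bochner) integral.
-/

open Real Set
open scoped ENNReal

lemma map_sub_prod_withDensity {G : Type*} [AddGroup G] [MeasurableSpace G] [MeasurableAdd₂ G]
    [MeasurableNeg G] {μ : Measure G} [SFinite μ] [μ.IsAddRightInvariant]
    {f g : G → ℝ≥0∞} (hf : Measurable f) (hg : Measurable g) :
    ((μ.withDensity f).prod (μ.withDensity g)).map (fun p => p.1 - p.2)
      = μ.withDensity (fun s => ∫⁻ y, f (s + y) * g y ∂μ) := by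
  refine Measure.ext_of_lintegral _ fun φ hφ => ?_
  have hH : Measurable fun z : G × G => f (z.1 + z.2) * g z.2 * φ z.1 := by fun_prop
  have hK : Measurable fun s => ∫⁻ y, f (s + y) * g y ∂μ :=
    Measurable.lintegral_prod_right' (f := fun z : G × G => f (z.1 + z.2) * g z.2) (by fun_prop)
  rw [lintegral_withDensity_eq_lintegral_mul _ hK hφ, lintegral_map hφ (by fun_prop),
    prod_withDensity hf hg, lintegral_withDensity_eq_lintegral_mul _ (by fun_prop) (by fun_prop)]
  calc ∫⁻ z, f z.1 * g z.2 * φ (z.1 - z.2) ∂μ.prod μ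
      = ∫⁻ z, f (z.1 + z.2) * g z.2 * φ z.1 ∂μ.prod μ := by
        simpa using (measurePreserving_sub_prod μ μ).lintegral_comp hH
    _ = ∫⁻ s, (∫⁻ y, f (s + y) * g y ∂μ) * φ s ∂μ := by
        rw [lintegral_prod _ hH.aemeasurable]
        exact lintegral_congr fun s => lintegral_mul_const (φ s) (by fun_prop)

lemma lintegral_add_mul_eq_lintegral_neg_add_mul {G : Type*} [AddCommGroup G]
    [MeasurableSpace G] [MeasurableAdd G] {μ : Measure G} [μ.IsAddRightInvariant]
    (f g : G → ℝ≥0∞) (s : G) :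
    ∫⁻ y, f (s + y) * g y ∂μ = ∫⁻ y, g (-s + y) * f y ∂μ := by
  rw [← lintegral_add_right_eq_self _ (-s)]
  simp only [add_neg_cancel_left, add_comm _ (-s), mul_comm]

lemma gammaPDFReal_add_mul_gammaPDFReal {a₁ l₁ a₂ l₂ s y : ℝ} (hl₁ : 0 < l₁) (hl₂ : 0 < l₂)
    (hs : 0 ≤ s) (hy : 0 < y) :
    gammaPDFReal a₁ l₁ (s + y) * gammaPDFReal a₂ l₂ y
      = (l₁ + l₂) * (l₁ ^ a₁ * l₂ ^ a₂ / ((l₁ + l₂) ^ a₂ * Gamma a₁ * Gamma a₂) * exp (-l₁ * s))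
        * (((l₁ + l₂) * y) ^ (a₂ - 1) * (s + (l₁ + l₂) * y / (l₁ + l₂)) ^ (a₁ - 1)
          * exp (-((l₁ + l₂) * y))) := by
  have hc : 0 < l₁ + l₂ := add_pos hl₁ hl₂
  rw [gammaPDFReal, gammaPDFReal, if_pos (by positivity), if_pos hy.le,
    mul_div_cancel_left₀ _ hc.ne', mul_rpow hc.le hy.le, rpow_sub_one hc.ne']
  field_simp
  rw [← exp_add, ← exp_add]
  ring_nf

lemma setLIntegral_Ioi_comp_mul_left {c : ℝ} (hc : 0 < c) (F : ℝ → ℝ≥0∞) :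
    ∫⁻ y in Ioi 0, F (c * y) = ENNReal.ofReal c⁻¹ * ∫⁻ v in Ioi 0, F v := by
  let e := (Homeomorph.mulLeft₀ c hc.ne').toMeasurableEquiv
  have he : e ⁻¹' Ioi 0 = Ioi 0 := by
    ext y; simp [e, mul_pos_iff_of_pos_left hc]
  rw [← smul_eq_mul, ← lintegral_smul_measure, ← Measure.restrict_smul,
    ← abs_of_pos (inv_pos.mpr hc), ← Real.map_volume_mul_left hc.ne']
  change _ = ∫⁻ v, F v ∂(Measure.map e volume).restrict (Ioi 0)
  rw [e.restrict_map, lintegral_map_equiv, he]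
  rfl

lemma lintegral_gammaPDF_add_mul_gammaPDF {a₁ l₁ a₂ l₂ s : ℝ} (ha₁ : 0 < a₁) (hl₁ : 0 < l₁)
    (ha₂ : 0 < a₂) (hl₂ : 0 < l₂) (hs : 0 ≤ s) :
    ∫⁻ y, gammaPDF a₁ l₁ (s + y) * gammaPDF a₂ l₂ y
      = ENNReal.ofReal (l₁ ^ a₁ * l₂ ^ a₂ / ((l₁ + l₂) ^ a₂ * Gamma a₁ * Gamma a₂) * exp (-l₁ * s))
        * ∫⁻ v in Ioi 0, ENNReal.ofReal
            (v ^ (a₂ - 1) * (s + v / (l₁ + l₂)) ^ (a₁ - 1) * exp (-v)) := by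
  set c := l₁ + l₂
  set K := l₁ ^ a₁ * l₂ ^ a₂ / (c ^ a₂ * Gamma a₁ * Gamma a₂) * exp (-l₁ * s)
  set φ := fun v => v ^ (a₂ - 1) * (s + v / c) ^ (a₁ - 1) * exp (-v)
  have hc : 0 < c := add_pos hl₁ hl₂
  have hK : 0 ≤ K := by
    have := Gamma_pos_of_pos ha₁
    have := Gamma_pos_of_pos ha₂
    positivity
  have h_supp : Function.support (fun y => gammaPDF a₁ l₁ (s + y) * gammaPDF a₂ l₂ y) ⊆ Ici 0 :=
    fun y hy => mem_Ici.mpr <| not_lt.mp fun hneg => hy (by simp [gammaPDF_of_neg hneg])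
  calc ∫⁻ y, gammaPDF a₁ l₁ (s + y) * gammaPDF a₂ l₂ y
      = ∫⁻ y in Ioi 0, ENNReal.ofReal (c * K) * ENNReal.ofReal (φ (c * y)) := by
        rw [← setLIntegral_eq_of_support_subset h_supp, ← restrict_Ioi_eq_restrict_Ici]
        refine setLIntegral_congr_fun measurableSet_Ioi fun y (hy : 0 < y) => ?_
        rw [gammaPDF, gammaPDF, ← ENNReal.ofReal_mul (gammaPDFReal_nonneg ha₁ hl₁ _),
          gammaPDFReal_add_mul_gammaPDFReal hl₁ hl₂ hs hy, ENNReal.ofReal_mul (by positivity)]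
    _ = ENNReal.ofReal K * ∫⁻ v in Ioi 0, ENNReal.ofReal (φ v) := by
        rw [lintegral_const_mul' _ _ ENNReal.ofReal_ne_top,
          setLIntegral_Ioi_comp_mul_left hc (fun v => ENNReal.ofReal (φ v)), ← mul_assoc,
          ← ENNReal.ofReal_mul (by positivity), mul_right_comm, mul_inv_cancel₀ hc.ne', one_mul]

lemma lintegral_gammaPDF_add_mul_gammaPDF_eq_ofReal {a₁ l₁ a₂ l₂ s : ℝ} (ha₁ : 0 < a₁)
    (hl₁ : 0 < l₁) (ha₂ : 0 < a₂) (hl₂ : 0 < l₂) (hs : 0 ≤ s)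
    (hfin : ∫⁻ y, gammaPDF a₁ l₁ (s + y) * gammaPDF a₂ l₂ y ≠ ∞) :
    ∫⁻ y, gammaPDF a₁ l₁ (s + y) * gammaPDF a₂ l₂ y
      = ENNReal.ofReal (l₁ ^ a₁ * l₂ ^ a₂ / ((l₁ + l₂) ^ a₂ * Gamma a₁ * Gamma a₂) * exp (-l₁ * s)
        * ∫ v in Ioi 0, v ^ (a₂ - 1) * (s + v / (l₁ + l₂)) ^ (a₁ - 1) * exp (-v)) := by
  have hK : 0 < l₁ ^ a₁ * l₂ ^ a₂ / ((l₁ + l₂) ^ a₂ * Gamma a₁ * Gamma a₂) * exp (-l₁ * s) := by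
    have := Gamma_pos_of_pos ha₁
    have := Gamma_pos_of_pos ha₂
    positivity
  rw [lintegral_gammaPDF_add_mul_gammaPDF ha₁ hl₁ ha₂ hl₂ hs] at hfin ⊢
  have hJ : ∫⁻ v in Ioi 0, ENNReal.ofReal
      (v ^ (a₂ - 1) * (s + v / (l₁ + l₂)) ^ (a₁ - 1) * exp (-v)) ≠ ∞ := fun h =>
    hfin (by rw [h, ENNReal.mul_top (ENNReal.ofReal_pos.mpr hK).ne'])
  have hnn : ∀ᵐ v ∂volume.restrict (Ioi 0),
      0 ≤ v ^ (a₂ - 1) * (s + v / (l₁ + l₂)) ^ (a₁ - 1) * exp (-v) :=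
    (ae_restrict_iff' measurableSet_Ioi).mpr <| ae_of_all _ fun v (hv : 0 < v) => by positivity
  rw [ENNReal.ofReal_mul hK.le, ofReal_integral_eq_lintegral_ofReal
    ((lintegral_ofReal_ne_top_iff_integrable (by fun_prop) hnn).mp hJ) hnn]

lemma ae_ne_top_of_isFiniteMeasure_withDensity {α : Type*} [MeasurableSpace α] {μ : Measure α}
    {f : α → ℝ≥0∞} [IsFiniteMeasure (μ.withDensity f)] (hf : AEMeasurable f μ) :
    ∀ᵐ x ∂μ, f x ≠ ∞ := by
  have h := measure_ne_top (μ.withDensity f) univ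
  rw [withDensity_apply _ MeasurableSet.univ, Measure.restrict_univ] at h
  filter_upwards [ae_lt_top' hf h] with x hx using hx.ne

/-- the bilateral Gamma distribution is absolutely continuous with respect to
Lebesgue measure, with the convolution density: for `x > 0`,
`f(x) = (λ⁺)^{α⁺}(λ⁻)^{α⁻}/((λ⁺+λ⁻)^{α⁻}Γ(α⁺)Γ(α⁻)) e^{−λ⁺x}
  ∫₀^∞ v^{α⁻−1}(x+v/(λ⁺+λ⁻))^{α⁺−1}e^{−v} dv`,
and for `x < 0` the symmetric expression with `(α⁺,λ⁺)` and `(α⁻,λ⁻)` interchanged and `x`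
replaced by `|x|`. -/
theorem bilateralGamma_density (ap lp am lm : ℝ)
    (hap : 0 < ap) (hlp : 0 < lp) (ham : 0 < am) (hlm : 0 < lm) :
    bilateralGammaMeasure ap lp am lm
      = volume.withDensity (fun x : ℝ => ENNReal.ofReal (
          if 0 < x then
            lp ^ ap * lm ^ am / ((lp + lm) ^ am * Real.Gamma ap * Real.Gamma am)
              * Real.exp (-lp * x)
              * ∫ v in Set.Ioi (0 : ℝ),
                  v ^ (am - 1) * (x + v / (lp + lm)) ^ (ap - 1) * Real.exp (-v)
          else if x < 0 then
            lm ^ am * lp ^ ap / ((lp + lm) ^ ap * Real.Gamma am * Real.Gamma ap)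
              * Real.exp (-lm * |x|)
              * ∫ v in Set.Ioi (0 : ℝ),
                  v ^ (ap - 1) * (|x| + v / (lp + lm)) ^ (am - 1) * Real.exp (-v)
          else 0)) := by
  have hpdf (a r : ℝ) : Measurable (gammaPDF a r) := (measurable_gammaPDFReal a r).ennreal_ofReal
  have hdens : Measurable fun s => ∫⁻ y, gammaPDF ap lp (s + y) * gammaPDF am lm y :=
    Measurable.lintegral_prod_right'
      (f := fun z : ℝ × ℝ => gammaPDF ap lp (z.1 + z.2) * gammaPDF am lm z.2) (by fun_prop)
  have hlaw : bilateralGammaMeasure ap lp am lm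
      = volume.withDensity (fun s => ∫⁻ y, gammaPDF ap lp (s + y) * gammaPDF am lm y) :=
    map_sub_prod_withDensity (hpdf ap lp) (hpdf am lm)
  have : IsProbabilityMeasure (gammaMeasure ap lp) := isProbabilityMeasure_gammaMeasure hap hlp
  have : IsProbabilityMeasure (gammaMeasure am lm) := isProbabilityMeasure_gammaMeasure ham hlm
  have : IsProbabilityMeasure (bilateralGammaMeasure ap lp am lm) :=
    Measure.isProbabilityMeasure_map (by fun_prop)
  rw [hlaw] at this ⊢
  refine withDensity_congr_ae ?_
  filter_upwards [ae_ne_top_of_isFiniteMeasure_withDensity hdens.aemeasurable, volume.ae_ne 0]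
    with s hfin hs
  rcases hs.lt_or_gt with hneg | hpos
  · rw [lintegral_add_mul_eq_lintegral_neg_add_mul] at hfin ⊢
    rw [if_neg hneg.not_gt, if_pos hneg, abs_of_neg hneg,
      lintegral_gammaPDF_add_mul_gammaPDF_eq_ofReal ham hlm hap hlp (by linarith) hfin,
      add_comm lm lp]
  · rw [if_pos hpos, lintegral_gammaPDF_add_mul_gammaPDF_eq_ofReal hap hlp ham hlm hpos.le hfin]
end

section
/- Let α⁺, α⁻ > 0 and for λ > 1 define φ(λ) := ( (λ/(λ−1))^{α⁺/α⁻} − 1 )^{−1}. Then φ(λ) > 0 and (λ/(λ−1))^{α⁺} = ((φ(λ) + 1)/φ(λ))^{α⁻}; consequently, if Z ~ Γ(α⁺, λ; α⁻, φ(λ)), then E[e^{Z}] = 1, so every bilateral Gamma distribution Γ(α⁺,λ;α⁻,φ(λ)) with λ > 1 satisfies the martingale condition of the exponential stock model. -/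
open MeasureTheory ProbabilityTheory

/-! Tilting the density of `Γ(a, r)` by `e^{tx}` gives a multiple of the density of
`Γ(a, r - t)`, so `E[e^{tX}] = (r/(r-t))^a`. Independence turns `E[e^{t(X-Y)}]` into a product
of two such moments, and `φ(λ)` is chosen precisely so that `((φ+1)/φ)^{α⁻} = (λ/(λ-1))^{α⁺}`
cancels the two factors at `t = 1`. -/

lemma gammaPDF_mul_exp_mul {a r t : ℝ} (hr : 0 < r) (ht : t < r) (x : ℝ) :
    gammaPDF a r x * ENNReal.ofReal (Real.exp (t * x))
      = ENNReal.ofReal ((r / (r - t)) ^ a) * gammaPDF a (r - t) x := by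
  have hrt : 0 < r - t := by linarith
  rcases lt_or_ge x 0 with hx | hx
  · rw [gammaPDF_of_neg hx, gammaPDF_of_neg hx, zero_mul, mul_zero]
  · rw [gammaPDF_of_nonneg hx, gammaPDF_of_nonneg hx,
      ← ENNReal.ofReal_mul' (Real.exp_nonneg _), ← ENNReal.ofReal_mul (by positivity)]
    have hexp : Real.exp (-(r * x)) * Real.exp (t * x) = Real.exp (-((r - t) * x)) := by
      rw [← Real.exp_add]; ring_nf
    have hpow : (r - t) ^ a ≠ 0 := (Real.rpow_pos_of_pos hrt a).ne'
    rw [Real.div_rpow hr.le hrt.le, mul_assoc, hexp]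
    field_simp

lemma lintegral_exp_mul_gammaMeasure {a r t : ℝ} (ha : 0 < a) (hr : 0 < r) (ht : t < r) :
    ∫⁻ x, ENNReal.ofReal (Real.exp (t * x)) ∂gammaMeasure a r
      = ENNReal.ofReal ((r / (r - t)) ^ a) := by
  have hdens (s : ℝ) : Measurable (gammaPDF a s) := (measurable_gammaPDFReal a s).ennreal_ofReal
  rw [gammaMeasure, lintegral_withDensity_eq_lintegral_mul _ (hdens r) (by fun_prop)]
  simp only [Pi.mul_apply, gammaPDF_mul_exp_mul hr ht]
  rw [lintegral_const_mul _ (hdens (r - t)),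
    lintegral_gammaPDF_eq_one ha (by linarith), mul_one]

lemma lintegral_exp_mul_bilateralGammaMeasure {ap lp am lm t : ℝ} (hap : 0 < ap) (hlp : 0 < lp)
    (ham : 0 < am) (hlm : 0 < lm) (htp : t < lp) (htm : -lm < t) :
    ∫⁻ x, ENNReal.ofReal (Real.exp (t * x)) ∂bilateralGammaMeasure ap lp am lm
      = ENNReal.ofReal ((lp / (lp - t)) ^ ap * (lm / (lm + t)) ^ am) := by
  have hsplit : ∀ p : ℝ × ℝ, ENNReal.ofReal (Real.exp (t * (p.1 - p.2)))
      = ENNReal.ofReal (Real.exp (t * p.1)) * ENNReal.ofReal (Real.exp (-t * p.2)) := by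
    intro p
    rw [← ENNReal.ofReal_mul (Real.exp_nonneg _), ← Real.exp_add]
    ring_nf
  have : IsProbabilityMeasure (gammaMeasure am lm) := isProbabilityMeasure_gammaMeasure ham hlm
  rw [bilateralGammaMeasure, lintegral_map (by fun_prop) (by fun_prop)]
  simp only [hsplit]
  rw [lintegral_prod_mul (f := fun x => ENNReal.ofReal (Real.exp (t * x)))
      (g := fun y => ENNReal.ofReal (Real.exp (-t * y))) (by fun_prop) (by fun_prop),
    lintegral_exp_mul_gammaMeasure hap hlp htp,
    lintegral_exp_mul_gammaMeasure ham hlm (by linarith), sub_neg_eq_add,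
    ← ENNReal.ofReal_mul (by positivity)]

lemma integral_exp_mul_bilateralGammaMeasure_s15 {ap lp am lm t : ℝ} (hap : 0 < ap) (hlp : 0 < lp)
    (ham : 0 < am) (hlm : 0 < lm) (htp : t < lp) (htm : -lm < t) :
    ∫ x, Real.exp (t * x) ∂bilateralGammaMeasure ap lp am lm
      = (lp / (lp - t)) ^ ap * (lm / (lm + t)) ^ am := by
  have hlpt : 0 < lp - t := by linarith
  have hlmt : 0 < lm + t := by linarith
  rw [integral_eq_lintegral_of_nonneg_ae (ae_of_all _ fun _ => Real.exp_nonneg _)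
    (by fun_prop), lintegral_exp_mul_bilateralGammaMeasure hap hlp ham hlm htp htm,
    ENNReal.toReal_ofReal (by positivity)]

lemma inv_sub_one_add_one_div_inv_sub_one {u : ℝ} (hu : u ≠ 1) :
    ((u - 1)⁻¹ + 1) / (u - 1)⁻¹ = u := by
  have : u - 1 ≠ 0 := sub_ne_zero.2 hu
  field_simp
  ring

/-- for `α⁺, α⁻ > 0` and `λ > 1`, with
`φ(λ) = ((λ/(λ−1))^{α⁺/α⁻} − 1)⁻¹` one has `φ(λ) > 0`,
`(λ/(λ−1))^{α⁺} = ((φ(λ)+1)/φ(λ))^{α⁻}`, and the bilateral Gamma distribution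
`Γ(α⁺,λ;α⁻,φ(λ))` satisfies the martingale condition `E[e^Z] = 1` of the exponential stock
model. -/
theorem bilateralGamma_emm (ap am lam φ : ℝ) (hap : 0 < ap) (ham : 0 < am) (hlam : 1 < lam)
    (hφ : φ = ((lam / (lam - 1)) ^ (ap / am) - 1)⁻¹) :
    0 < φ
      ∧ (lam / (lam - 1)) ^ ap = ((φ + 1) / φ) ^ am
      ∧ (∫ x, Real.exp x ∂(bilateralGammaMeasure ap lam am φ)) = 1 := by
  have hbase : 1 < lam / (lam - 1) := by rw [one_lt_div (by linarith)]; linarith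
  have hu : 1 < (lam / (lam - 1)) ^ (ap / am) := Real.one_lt_rpow hbase (by positivity)
  have hφpos : 0 < φ := hφ ▸ inv_pos.2 (sub_pos.2 hu)
  have hpow : (lam / (lam - 1)) ^ ap = ((φ + 1) / φ) ^ am := by
    rw [hφ, inv_sub_one_add_one_div_inv_sub_one hu.ne', ← Real.rpow_mul (by positivity),
      div_mul_cancel₀ _ ham.ne']
  refine ⟨hφpos, hpow, ?_⟩
  have hmoment := integral_exp_mul_bilateralGammaMeasure_s15 (t := 1) hap (by linarith) ham
    hφpos hlam (by linarith)
  simp only [one_mul] at hmoment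
  rw [hmoment, hpow, ← Real.mul_rpow (by positivity) (by positivity),
    div_mul_div_cancel₀ hφpos.ne', div_self (by positivity), Real.one_rpow]
end
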